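/- arXiv:1712.06064 — 6 statements merged into one kernel-verified Lean document; each statement's English description precedes it below -/
import Mathlib

section
/- Let g_j = χ_{τ_j} restricted to [q_j^l, q_j^u] with q_j^l ≤ τ_j^1 ≤ q_j^u for j = 1,...,n. Then the function g(z) := max{ Σ_j g_j(x_j) : Σ_j x_j = z, x_j ∈ [q_j^l, q_j^u] } defined on [Σ_j q_j^l, Σ_j q_j^u] equals χ_{(Σ_j τ_j^1, Σ_j τ_j^2)} on that interval. -/
/-!
The triangle inequality `|∑ (x j - τ1 j)| ≤ ∑ |x j - τ1 j|` bounds every feasible value by the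
tent with top point `(∑ τ1, ∑ τ2)`, with equality as soon as all `x j - τ1 j` have the same sign.
If `∑ τ1 ≤ z`, such a feasible point is found in the box `[τ1, qu]` by the intermediate value
theorem applied to `x ↦ ∑ x`; otherwise in the box `[ql, τ1]`.
-/

open Finset

/-- The tent function with top point `(t1, t2)`: `chi t1 t2 x = t2 - |x - t1|`. -/
noncomputable def chi (t1 t2 x : ℝ) : ℝ := t2 - |x - t1|

lemma chi_of_le {t1 x : ℝ} (t2 : ℝ) (h : t1 ≤ x) : chi t1 t2 x = t2 - (x - t1) := by
  rw [chi, abs_of_nonneg (sub_nonneg.mpr h)]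

lemma chi_of_ge {t1 x : ℝ} (t2 : ℝ) (h : x ≤ t1) : chi t1 t2 x = t2 - (t1 - x) := by
  rw [chi, abs_of_nonpos (sub_nonpos.mpr h), neg_sub]

section Tents

variable {ι : Type*} [Fintype ι] (τ1 τ2 x : ι → ℝ)

lemma sum_chi_le_chi_sum :
    ∑ j, chi (τ1 j) (τ2 j) (x j) ≤ chi (∑ j, τ1 j) (∑ j, τ2 j) (∑ j, x j) := by
  have : |∑ j, x j - ∑ j, τ1 j| ≤ ∑ j, |x j - τ1 j| := by
    rw [← sum_sub_distrib]
    exact abs_sum_le_sum_abs _ _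
  simp only [chi, sum_sub_distrib]
  linarith

variable {τ1 x}

lemma sum_chi_of_le (h : ∀ j, τ1 j ≤ x j) :
    ∑ j, chi (τ1 j) (τ2 j) (x j) = chi (∑ j, τ1 j) (∑ j, τ2 j) (∑ j, x j) := by
  simp only [chi_of_le _ (h _), chi_of_le _ (sum_le_sum fun j _ => h j), sum_sub_distrib]

lemma sum_chi_of_ge (h : ∀ j, x j ≤ τ1 j) :
    ∑ j, chi (τ1 j) (τ2 j) (x j) = chi (∑ j, τ1 j) (∑ j, τ2 j) (∑ j, x j) := by
  simp only [chi_of_ge _ (h _), chi_of_ge _ (sum_le_sum fun j _ => h j), sum_sub_distrib]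

end Tents

lemma exists_mem_Icc_sum_eq {ι : Type*} [Fintype ι] {a b : ι → ℝ} (hab : a ≤ b) {z : ℝ}
    (hz : z ∈ Set.Icc (∑ j, a j) (∑ j, b j)) : ∃ x ∈ Set.Icc a b, ∑ j, x j = z :=
  (convex_Icc a b).isPreconnected.intermediate_value (Set.left_mem_Icc.mpr hab)
    (Set.right_mem_Icc.mpr hab) (continuous_finsetSum _ fun j _ => continuous_apply j).continuousOn hz

/-- Maximizing a sum of tent functions over compact intervals containing the top points,
subject to the coupling constraint `∑ x j = z`, yields the tent function with top point
`(∑ τ1, ∑ τ2)` on the domain `[∑ ql, ∑ qu]`. -/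
theorem stmt5 (n : ℕ) (τ1 τ2 ql qu : Fin n → ℝ)
    (hq : ∀ j, ql j ≤ τ1 j ∧ τ1 j ≤ qu j)
    (z : ℝ) (hz : z ∈ Set.Icc (∑ j, ql j) (∑ j, qu j)) :
    IsGreatest
      {s : ℝ | ∃ x : Fin n → ℝ, (∀ j, x j ∈ Set.Icc (ql j) (qu j)) ∧
        (∑ j, x j) = z ∧ s = ∑ j, chi (τ1 j) (τ2 j) (x j)}
      (chi (∑ j, τ1 j) (∑ j, τ2 j) z) := by
  refine ⟨?_, ?_⟩
  · rcases le_total (∑ j, τ1 j) z with hτz | hzτ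
    · obtain ⟨x, ⟨hτx, hxq⟩, rfl⟩ :=
        exists_mem_Icc_sum_eq (fun j => (hq j).2) ⟨hτz, hz.2⟩
      exact ⟨x, fun j => ⟨(hq j).1.trans (hτx j), hxq j⟩, rfl, (sum_chi_of_le τ2 hτx).symm⟩
    · obtain ⟨x, ⟨hqx, hxτ⟩, rfl⟩ :=
        exists_mem_Icc_sum_eq (fun j => (hq j).1) ⟨hz.1, hzτ⟩
      exact ⟨x, fun j => ⟨hqx j, (hxτ j).trans (hq j).2⟩, rfl, (sum_chi_of_ge τ2 hxτ).symm⟩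
  · rintro s ⟨x, -, rfl, rfl⟩
    exact sum_chi_le_chi_sum τ1 τ2 x
end

section
/- In the setting of maximizing Σ_j χ_{τ_j}(x_j) subject to Σ_j x_j = z and x_j ∈ [q_j^l, q_j^u] with q_j^l ≤ τ_j^1 ≤ q_j^u: if z = Σ_j τ_j^1 then x* = (τ_1^1,...,τ_n^1) is the unique maximizer; if Σ_j q_j^l ≤ z < Σ_j τ_j^1 then the set of maximizers equals { x : q^l ≤ x ≤ τ^1 componentwise, Σ_j x_j = z }; and symmetrically for Σ_j τ_j^1 < z ≤ Σ_j q_j^u the maximizers are { x : τ^1 ≤ x ≤ q^u componentwise, Σ_j x_j = z }. -/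
open Finset

section
variable {ι : Type*} [Fintype ι]

theorem sum_sub_sum_le_sum_abs_sub (a b : ι → ℝ) : ∑ j, a j - ∑ j, b j ≤ ∑ j, |a j - b j| := by
  rw [← sum_sub_distrib]
  exact sum_le_sum fun j _ => le_abs_self _

theorem sum_abs_sub_eq_sum_sub_sum_iff (a b : ι → ℝ) :
    ∑ j, |a j - b j| = ∑ j, a j - ∑ j, b j ↔ b ≤ a := by
  rw [← sum_sub_distrib, eq_comm, sum_eq_sum_iff_of_le fun j _ => le_abs_self _, Pi.le_def]
  simp only [mem_univ, true_implies, eq_comm (a := _ - _), abs_eq_self, sub_nonneg]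

theorem maximizers_eq_of_le_of_exists {α β : Type*} [PartialOrder β] {D : Set α} {F : α → β}
    {m : β} (hle : ∀ x ∈ D, F x ≤ m) (hex : ∃ w ∈ D, F w = m) :
    {x ∈ D | ∀ y ∈ D, F y ≤ F x} = {x ∈ D | F x = m} := by
  obtain ⟨w, hwD, hw⟩ := hex
  ext x
  constructor
  · rintro ⟨hxD, hmax⟩
    exact ⟨hxD, (hle x hxD).antisymm (hw ▸ hmax w hwD)⟩
  · rintro ⟨hxD, hx⟩
    exact ⟨hxD, fun y hy => hx ▸ hle y hy⟩

def boxSlice (l u : ι → ℝ) (z : ℝ) : Set (ι → ℝ) :=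
  {x | (∀ j, x j ∈ Set.Icc (l j) (u j)) ∧ ∑ j, x j = z}

theorem boxSlice_mono {l l' u u' : ι → ℝ} (hl : l' ≤ l) (hu : u ≤ u') (z : ℝ) :
    boxSlice l u z ⊆ boxSlice l' u' z := fun _ ⟨hx, hsum⟩ =>
  ⟨fun j => ⟨(hl j).trans (hx j).1, (hx j).2.trans (hu j)⟩, hsum⟩

theorem boxSlice_nonempty {l u : ι → ℝ} (hlu : l ≤ u) {z : ℝ}
    (hz : z ∈ Set.Icc (∑ j, l j) (∑ j, u j)) : (boxSlice l u z).Nonempty := by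
  have hsum : ContinuousOn (fun x : ι → ℝ => ∑ j, x j) (Set.Icc l u) :=
    (continuous_finsetSum _ fun j _ => continuous_apply j).continuousOn
  obtain ⟨x, ⟨hlx, hxu⟩, hx⟩ := (convex_Icc l u).isPreconnected.intermediate_value
    (Set.left_mem_Icc.2 hlu) (Set.right_mem_Icc.2 hlu) hsum hz
  exact ⟨x, fun j => ⟨hlx j, hxu j⟩, hx⟩

theorem boxSlice_sum_right {l u : ι → ℝ} (hlu : l ≤ u) : boxSlice l u (∑ j, u j) = {u} := by
  ext x
  constructor
  · rintro ⟨hx, hsum⟩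
    funext j
    exact (sum_eq_sum_iff_of_le fun j _ => (hx j).2).1 hsum j (mem_univ j)
  · rintro rfl
    exact ⟨fun j => ⟨hlu j, le_rfl⟩, rfl⟩

noncomputable def tentSum (τ1 τ2 x : ι → ℝ) : ℝ := ∑ j, chi (τ1 j) (τ2 j) (x j)

variable (τ1 τ2 : ι → ℝ) {x : ι → ℝ} {z : ℝ}

theorem tentSum_eq (x : ι → ℝ) : tentSum τ1 τ2 x = ∑ j, τ2 j - ∑ j, |x j - τ1 j| := by
  simp only [tentSum, chi, sum_sub_distrib]

theorem tentSum_eq' (x : ι → ℝ) : tentSum τ1 τ2 x = ∑ j, τ2 j - ∑ j, |τ1 j - x j| := by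
  simp only [tentSum_eq, abs_sub_comm]

theorem tentSum_le_of_sum_eq (hx : ∑ j, x j = z) :
    tentSum τ1 τ2 x ≤ ∑ j, τ2 j - (∑ j, τ1 j - z) := by
  rw [tentSum_eq', ← hx]
  linarith [sum_sub_sum_le_sum_abs_sub τ1 x]

theorem tentSum_eq_iff_le_of_sum_eq (hx : ∑ j, x j = z) :
    tentSum τ1 τ2 x = ∑ j, τ2 j - (∑ j, τ1 j - z) ↔ x ≤ τ1 := by
  rw [tentSum_eq', ← hx, sub_right_inj, sum_abs_sub_eq_sum_sub_sum_iff]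

theorem tentSum_le_of_sum_eq' (hx : ∑ j, x j = z) :
    tentSum τ1 τ2 x ≤ ∑ j, τ2 j - (z - ∑ j, τ1 j) := by
  rw [tentSum_eq, ← hx]
  linarith [sum_sub_sum_le_sum_abs_sub x τ1]

theorem tentSum_eq_iff_ge_of_sum_eq (hx : ∑ j, x j = z) :
    tentSum τ1 τ2 x = ∑ j, τ2 j - (z - ∑ j, τ1 j) ↔ τ1 ≤ x := by
  rw [tentSum_eq, ← hx, sub_right_inj, sum_abs_sub_eq_sum_sub_sum_iff]

variable {τ1 τ2} {ql qu : ι → ℝ}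

theorem maximizers_tentSum_of_le (hl : ql ≤ τ1) (hu : τ1 ≤ qu)
    (hz : z ∈ Set.Icc (∑ j, ql j) (∑ j, τ1 j)) :
    {x ∈ boxSlice ql qu z | ∀ y ∈ boxSlice ql qu z, tentSum τ1 τ2 y ≤ tentSum τ1 τ2 x} =
      boxSlice ql τ1 z := by
  have hsub : boxSlice ql τ1 z ⊆ boxSlice ql qu z := boxSlice_mono le_rfl hu z
  obtain ⟨w, hw⟩ := boxSlice_nonempty hl hz
  rw [maximizers_eq_of_le_of_exists (F := tentSum τ1 τ2) (fun x hx => tentSum_le_of_sum_eq τ1 τ2 hx.2)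
    ⟨w, hsub hw, (tentSum_eq_iff_le_of_sum_eq τ1 τ2 hw.2).2 fun j => (hw.1 j).2⟩]
  ext x
  constructor
  · rintro ⟨⟨hx, hsum⟩, hopt⟩
    have hxτ := (tentSum_eq_iff_le_of_sum_eq τ1 τ2 hsum).1 hopt
    exact ⟨fun j => ⟨(hx j).1, hxτ j⟩, hsum⟩
  · intro hx
    exact ⟨hsub hx, (tentSum_eq_iff_le_of_sum_eq τ1 τ2 hx.2).2 fun j => (hx.1 j).2⟩

theorem maximizers_tentSum_of_ge (hl : ql ≤ τ1) (hu : τ1 ≤ qu)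
    (hz : z ∈ Set.Icc (∑ j, τ1 j) (∑ j, qu j)) :
    {x ∈ boxSlice ql qu z | ∀ y ∈ boxSlice ql qu z, tentSum τ1 τ2 y ≤ tentSum τ1 τ2 x} =
      boxSlice τ1 qu z := by
  have hsub : boxSlice τ1 qu z ⊆ boxSlice ql qu z := boxSlice_mono hl le_rfl z
  obtain ⟨w, hw⟩ := boxSlice_nonempty hu hz
  rw [maximizers_eq_of_le_of_exists (F := tentSum τ1 τ2) (fun x hx => tentSum_le_of_sum_eq' τ1 τ2 hx.2)
    ⟨w, hsub hw, (tentSum_eq_iff_ge_of_sum_eq τ1 τ2 hw.2).2 fun j => (hw.1 j).1⟩]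
  ext x
  constructor
  · rintro ⟨⟨hx, hsum⟩, hopt⟩
    have hτx := (tentSum_eq_iff_ge_of_sum_eq τ1 τ2 hsum).1 hopt
    exact ⟨fun j => ⟨hτx j, (hx j).2⟩, hsum⟩
  · intro hx
    exact ⟨hsub hx, (tentSum_eq_iff_ge_of_sum_eq τ1 τ2 hx.2).2 fun j => (hx.1 j).1⟩

end

/-- Characterization of the maximizers of `∑ j chi (τ1 j) (τ2 j) (x j)` subject to
`∑ j x j = z` and `x j ∈ [ql j, qu j]`, with `ql j ≤ τ1 j ≤ qu j`. -/
theorem stmt6 (n : ℕ) (τ1 τ2 ql qu : Fin n → ℝ)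
    (hq : ∀ j, ql j ≤ τ1 j ∧ τ1 j ≤ qu j) (z : ℝ)
    (D : Set (Fin n → ℝ)) (hD : D = {x | (∀ j, x j ∈ Set.Icc (ql j) (qu j)) ∧ (∑ j, x j) = z})
    (F : (Fin n → ℝ) → ℝ) (hF : F = fun x => ∑ j, chi (τ1 j) (τ2 j) (x j))
    (M : Set (Fin n → ℝ)) (hM : M = {x ∈ D | ∀ y ∈ D, F y ≤ F x}) :
    (z = ∑ j, τ1 j → M = {τ1}) ∧
    (∑ j, ql j ≤ z ∧ z < ∑ j, τ1 j →
      M = {x | (∀ j, ql j ≤ x j ∧ x j ≤ τ1 j) ∧ (∑ j, x j) = z}) ∧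
    (∑ j, τ1 j < z ∧ z ≤ ∑ j, qu j →
      M = {x | (∀ j, τ1 j ≤ x j ∧ x j ≤ qu j) ∧ (∑ j, x j) = z}) := by
  subst hD hF hM
  have hl : ql ≤ τ1 := fun j => (hq j).1
  have hu : τ1 ≤ qu := fun j => (hq j).2
  refine ⟨fun hz => ?_, fun hz => ?_, fun hz => ?_⟩
  · subst hz
    exact (maximizers_tentSum_of_le hl hu ⟨sum_le_sum fun j _ => hl j, le_rfl⟩).trans
      (boxSlice_sum_right hl)
  · exact maximizers_tentSum_of_le hl hu ⟨hz.1, hz.2.le⟩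
  · exact maximizers_tentSum_of_ge hl hu ⟨hz.1.le, hz.2⟩
end

section
/- Let P₁ and P₂ be nonempty compact convex subsets of ℝ, and for i = 1,2 let g_i : conv(X_i) → ℝ be tent functions χ_{τ_i} with top points satisfying τ_i^1 ∈ X_i, where each X_i ⊂ ℝ is a finite union of disjoint closed intervals. If both X₁∩(−∞,τ₁¹] + X₂∩(−∞,τ₂¹] and X₁∩[τ₁¹,∞) + X₂∩[τ₂¹,∞) are intervals (connected), then for every z, sup{ g₁(x₁)+g₂(x₂) : x₁∈X₁, x₂∈X₂, x₁+x₂=z } = sup{ g₁(x₁)+g₂(x₂) : x₁∈conv(X₁), x₂∈conv(X₂), x₁+x₂=z }. -/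
/-!
Since `chi a₁ b₁ x₁ + chi a₂ b₂ x₂ ≤ chi (a₁ + a₂) (b₁ + b₂) (x₁ + x₂)` by the triangle
inequality, with equality when `x₁, x₂` lie on the same side of their top points, both suprema
are at most the tent `chi (τ₁ 0 + τ₁ 1) (τ₂ 0 + τ₂ 1) z`. If `z = x₁ + x₂` with `xᵢ` in the
convex hulls, then, say for `z ≤ τ₁ 0 + τ₁ 1`, `z` lies between a sum of points of the lower
parts below `x₁, x₂` and the sum of the top points; the lower Minkowski sum is an interval, so
`z` is a sum of points of the lower parts of `X 0`, `X 1`, where the bound is attained.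
If `z` has no such decomposition, both sets are empty.
-/

open Pointwise

open Set

section Tent

variable {a₁ a₂ b₁ b₂ x₁ x₂ : ℝ}

theorem chi_add_chi_le : chi a₁ b₁ x₁ + chi a₂ b₂ x₂ ≤ chi (a₁ + a₂) (b₁ + b₂) (x₁ + x₂) := by
  have := abs_add_le (x₁ - a₁) (x₂ - a₂)
  simp only [chi]
  rw [show x₁ + x₂ - (a₁ + a₂) = x₁ - a₁ + (x₂ - a₂) by ring]
  linarith

theorem chi_add_chi_of_le (h₁ : x₁ ≤ a₁) (h₂ : x₂ ≤ a₂) :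
    chi a₁ b₁ x₁ + chi a₂ b₂ x₂ = chi (a₁ + a₂) (b₁ + b₂) (x₁ + x₂) := by
  simp only [chi]
  rw [abs_of_nonpos (by linarith), abs_of_nonpos (by linarith), abs_of_nonpos (by linarith)]
  ring

theorem chi_add_chi_of_ge (h₁ : a₁ ≤ x₁) (h₂ : a₂ ≤ x₂) :
    chi a₁ b₁ x₁ + chi a₂ b₂ x₂ = chi (a₁ + a₂) (b₁ + b₂) (x₁ + x₂) := by
  simp only [chi]
  rw [abs_of_nonneg (by linarith), abs_of_nonneg (by linarith), abs_of_nonneg (by linarith)]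
  ring

end Tent

section ConvexHull

variable {s t : Set ℝ} {a b x y : ℝ}

theorem exists_mem_le_of_mem_convexHull (hx : x ∈ convexHull ℝ s) : ∃ a ∈ s, a ≤ x := by
  by_contra! h
  exact lt_irrefl x (convexHull_min h (convex_Ioi x) hx)

theorem exists_mem_ge_of_mem_convexHull (hx : x ∈ convexHull ℝ s) : ∃ a ∈ s, x ≤ a := by
  by_contra! h
  exact lt_irrefl x (convexHull_min h (convex_Iio x) hx)

theorem add_mem_add_inter_Iic (ha : a ∈ s) (hb : b ∈ t)
    (hconn : IsPreconnected ((s ∩ Iic a) + (t ∩ Iic b)))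
    (hx : x ∈ convexHull ℝ s) (hy : y ∈ convexHull ℝ t) (hxy : x + y ≤ a + b) :
    x + y ∈ (s ∩ Iic a) + (t ∩ Iic b) := by
  obtain ⟨x', hx's, hx'x⟩ := exists_mem_le_of_mem_convexHull hx
  obtain ⟨y', hy't, hy'y⟩ := exists_mem_le_of_mem_convexHull hy
  have hlower : min x' a + min y' b ∈ (s ∩ Iic a) + (t ∩ Iic b) :=
    add_mem_add ⟨min_rec' (· ∈ s) hx's ha, min_le_right x' a⟩
      ⟨min_rec' (· ∈ t) hy't hb, min_le_right y' b⟩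
  have htop : a + b ∈ (s ∩ Iic a) + (t ∩ Iic b) :=
    add_mem_add ⟨ha, self_mem_Iic⟩ ⟨hb, self_mem_Iic⟩
  refine hconn.ordConnected.out hlower htop ⟨?_, hxy⟩
  linarith [min_le_left x' a, min_le_left y' b]

theorem add_mem_add_inter_Ici (ha : a ∈ s) (hb : b ∈ t)
    (hconn : IsPreconnected ((s ∩ Ici a) + (t ∩ Ici b)))
    (hx : x ∈ convexHull ℝ s) (hy : y ∈ convexHull ℝ t) (hxy : a + b ≤ x + y) :
    x + y ∈ (s ∩ Ici a) + (t ∩ Ici b) := by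
  obtain ⟨x', hx's, hxx'⟩ := exists_mem_ge_of_mem_convexHull hx
  obtain ⟨y', hy't, hyy'⟩ := exists_mem_ge_of_mem_convexHull hy
  have hupper : max x' a + max y' b ∈ (s ∩ Ici a) + (t ∩ Ici b) :=
    add_mem_add ⟨max_rec' (· ∈ s) hx's ha, le_max_right x' a⟩
      ⟨max_rec' (· ∈ t) hy't hb, le_max_right y' b⟩
  have htop : a + b ∈ (s ∩ Ici a) + (t ∩ Ici b) :=
    add_mem_add ⟨ha, self_mem_Ici⟩ ⟨hb, self_mem_Ici⟩
  refine hconn.ordConnected.out htop hupper ⟨hxy, ?_⟩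
  linarith [le_max_left x' a, le_max_left y' b]

end ConvexHull

theorem exists_chi_add_chi_eq {s t : Set ℝ} {a₁ a₂ b₁ b₂ x₁ x₂ : ℝ}
    (ha₁ : a₁ ∈ s) (ha₂ : a₂ ∈ t)
    (hlow : IsPreconnected ((s ∩ Iic a₁) + (t ∩ Iic a₂)))
    (hhigh : IsPreconnected ((s ∩ Ici a₁) + (t ∩ Ici a₂)))
    (hx₁ : x₁ ∈ convexHull ℝ s) (hx₂ : x₂ ∈ convexHull ℝ t) :
    ∃ y₁ ∈ s, ∃ y₂ ∈ t, y₁ + y₂ = x₁ + x₂ ∧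
      chi a₁ b₁ y₁ + chi a₂ b₂ y₂ = chi (a₁ + a₂) (b₁ + b₂) (x₁ + x₂) := by
  rcases le_total (x₁ + x₂) (a₁ + a₂) with h | h
  · obtain ⟨y₁, ⟨hy₁, hy₁a⟩, y₂, ⟨hy₂, hy₂a⟩, hy⟩ :=
      add_mem_add_inter_Iic ha₁ ha₂ hlow hx₁ hx₂ h
    exact ⟨y₁, hy₁, y₂, hy₂, hy, hy ▸ chi_add_chi_of_le hy₁a hy₂a⟩
  · obtain ⟨y₁, ⟨hy₁, hy₁a⟩, y₂, ⟨hy₂, hy₂a⟩, hy⟩ :=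
      add_mem_add_inter_Ici ha₁ ha₂ hhigh hx₁ hx₂ h
    exact ⟨y₁, hy₁, y₂, hy₂, hy, hy ▸ chi_add_chi_of_ge hy₁a hy₂a⟩

theorem isGreatest_chi_add_chi {s t : Set ℝ} {a₁ a₂ b₁ b₂ x₁ x₂ z : ℝ}
    (hx₁ : x₁ ∈ s) (hx₂ : x₂ ∈ t) (hz : x₁ + x₂ = z)
    (heq : chi a₁ b₁ x₁ + chi a₂ b₂ x₂ = chi (a₁ + a₂) (b₁ + b₂) z) :
    IsGreatest {r : ℝ | ∃ x₁ ∈ s, ∃ x₂ ∈ t, x₁ + x₂ = z ∧ r = chi a₁ b₁ x₁ + chi a₂ b₂ x₂}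
      (chi (a₁ + a₂) (b₁ + b₂) z) := by
  refine ⟨⟨x₁, hx₁, x₂, hx₂, hz, heq.symm⟩, ?_⟩
  rintro r ⟨y₁, -, y₂, -, rfl, rfl⟩
  exact chi_add_chi_le

theorem stmt8_general (X : Fin 2 → Set ℝ) (τ1 τ2 : Fin 2 → ℝ)
    (hτ : ∀ i, τ1 i ∈ X i)
    (hlow : IsPreconnected ((X 0 ∩ Set.Iic (τ1 0)) + (X 1 ∩ Set.Iic (τ1 1))))
    (hhigh : IsPreconnected ((X 0 ∩ Set.Ici (τ1 0)) + (X 1 ∩ Set.Ici (τ1 1)))) :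
    ∀ z : ℝ,
      sSup {s : ℝ | ∃ x1 ∈ X 0, ∃ x2 ∈ X 1, x1 + x2 = z ∧
          s = chi (τ1 0) (τ2 0) x1 + chi (τ1 1) (τ2 1) x2} =
      sSup {s : ℝ | ∃ x1 ∈ convexHull ℝ (X 0), ∃ x2 ∈ convexHull ℝ (X 1), x1 + x2 = z ∧
          s = chi (τ1 0) (τ2 0) x1 + chi (τ1 1) (τ2 1) x2} := by
  intro z
  by_cases hne : {s : ℝ | ∃ x1 ∈ convexHull ℝ (X 0), ∃ x2 ∈ convexHull ℝ (X 1), x1 + x2 = z ∧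
      s = chi (τ1 0) (τ2 0) x1 + chi (τ1 1) (τ2 1) x2}.Nonempty
  · obtain ⟨-, x₁, hx₁, x₂, hx₂, rfl, -⟩ := hne
    obtain ⟨y₁, hy₁, y₂, hy₂, hy, heq⟩ :=
      exists_chi_add_chi_eq (b₁ := τ2 0) (b₂ := τ2 1) (hτ 0) (hτ 1) hlow hhigh hx₁ hx₂
    rw [(isGreatest_chi_add_chi hy₁ hy₂ hy heq).csSup_eq,
      (isGreatest_chi_add_chi (subset_convexHull ℝ _ hy₁) (subset_convexHull ℝ _ hy₂) hy
        heq).csSup_eq]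
  · congr 1
    rw [not_nonempty_iff_eq_empty.1 hne, eq_empty_iff_forall_notMem]
    rintro r ⟨y₁, hy₁, y₂, hy₂, hy⟩
    exact hne ⟨r, y₁, subset_convexHull ℝ _ hy₁, y₂, subset_convexHull ℝ _ hy₂, hy⟩

/-- If `X 0`, `X 1` are finite unions of disjoint closed bounded intervals, the top point
abscissae belong to the sets, and the Minkowski sums of the lower parts and of the upper
parts are connected, then optimizing the sum of the two tent functions over `X 0 × X 1`
subject to `x1 + x2 = z` gives the same value as over the convex hulls. -/
theorem stmt8 (X : Fin 2 → Set ℝ) (τ1 τ2 : Fin 2 → ℝ)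
    (hX : ∀ i, ∃ (m : ℕ) (a b : Fin m → ℝ), (∀ j, a j ≤ b j) ∧
      (∀ j j', j ≠ j' → Disjoint (Set.Icc (a j) (b j)) (Set.Icc (a j') (b j'))) ∧
      X i = ⋃ j, Set.Icc (a j) (b j))
    (hXne : ∀ i, (X i).Nonempty)
    (hτ : ∀ i, τ1 i ∈ X i)
    (hlow : IsPreconnected ((X 0 ∩ Set.Iic (τ1 0)) + (X 1 ∩ Set.Iic (τ1 1))))
    (hhigh : IsPreconnected ((X 0 ∩ Set.Ici (τ1 0)) + (X 1 ∩ Set.Ici (τ1 1)))) :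
    ∀ z : ℝ,
      sSup {s : ℝ | ∃ x1 ∈ X 0, ∃ x2 ∈ X 1, x1 + x2 = z ∧
          s = chi (τ1 0) (τ2 0) x1 + chi (τ1 1) (τ2 1) x2} =
      sSup {s : ℝ | ∃ x1 ∈ convexHull ℝ (X 0), ∃ x2 ∈ convexHull ℝ (X 1), x1 + x2 = z ∧
          s = chi (τ1 0) (τ2 0) x1 + chi (τ1 1) (τ2 1) x2} :=
  stmt8_general X τ1 τ2 hτ hlow hhigh
end

section
/- Let P ⊂ {x ∈ ℝ^d : x_k > 0} be a polytope contained in a hyperplane not orthogonal to {x_k = 0}. With γ̂ > max_{x∈P} x_k, the sweep swp_k(P) = {p − θ p_k e_k : p ∈ P, θ ∈ [0,1]} equals (P + [−γ̂ e_k, 0]) ∩ {x : x_k ≥ 0}, where P + [−γ̂ e_k, 0] denotes the Minkowski sum of P with the segment from −γ̂ e_k to the origin. -/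
/-!
Both sets are unions of vertical segments below the points `p ∈ P`. The sweep contributes
`{p - t e_k : 0 ≤ t ≤ p_k}`, while the Minkowski sum contributes `{p - t e_k : 0 ≤ t ≤ γ}`,
which the halfspace `x_k ≥ 0` cuts down to `t ≤ p_k`; as `p_k ≤ γ` the two pieces agree.
-/

open Pointwise

/-- Sweep of a set `P` in direction `e k`: the union of all segments from points of `P`
to their projections onto `{x | x k = 0}`. -/
def swpk (d : ℕ) (k : Fin d) (P : Set (Fin d → ℝ)) : Set (Fin d → ℝ) :=
  {q | ∃ p ∈ P, ∃ θ ∈ Set.Icc (0 : ℝ) 1, q = p - (θ * p k) • (Pi.single k 1 : Fin d → ℝ)}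

open Set

theorem segment_neg_smul_zero_eq_image {E : Type*} [AddCommGroup E] [Module ℝ E]
    (e : E) (γ : ℝ) : segment ℝ (-(γ • e)) 0 = (fun t : ℝ => -(t • e)) '' uIcc 0 γ := by
  have h := image_segment ℝ (LinearMap.toSpanSingleton ℝ E (-e)).toAffineMap γ 0
  simp only [LinearMap.coe_toAffineMap, LinearMap.toSpanSingleton_apply, smul_neg, zero_smul,
    neg_zero, segment_eq_uIcc] at h
  rw [← h, uIcc_comm]

theorem mem_add_segment_neg_smul_zero_iff {E : Type*} [AddCommGroup E] [Module ℝ E]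
    {P : Set E} {e q : E} {γ : ℝ} :
    q ∈ P + segment ℝ (-(γ • e)) 0 ↔ ∃ p ∈ P, ∃ t ∈ uIcc 0 γ, q = p - t • e := by
  simp only [segment_neg_smul_zero_eq_image, mem_add, exists_mem_image, ← sub_eq_add_neg,
    eq_comm]

theorem mem_swpk_iff {d : ℕ} {k : Fin d} {P : Set (Fin d → ℝ)} (hP : ∀ p ∈ P, 0 ≤ p k)
    {q : Fin d → ℝ} :
    q ∈ swpk d k P ↔ ∃ p ∈ P, ∃ t ∈ Icc 0 (p k), q = p - t • (Pi.single k 1 : Fin d → ℝ) := by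
  rw [swpk, mem_ofPred_eq]
  refine exists_congr fun p => and_congr_right fun hp => ?_
  have hIcc : (· * p k) '' Icc 0 1 = Icc 0 (p k) := by
    simpa using image_mul_right_Icc zero_le_one (hP p hp)
  rw [← hIcc, exists_mem_image]

theorem swpk_eq_add_segment_inter {d : ℕ} {k : Fin d} {P : Set (Fin d → ℝ)} {γ : ℝ}
    (hP : ∀ p ∈ P, p k ∈ Icc 0 γ) :
    swpk d k P =
      (P + segment ℝ (-(γ • (Pi.single k 1 : Fin d → ℝ))) 0) ∩ {x | 0 ≤ x k} := by
  ext q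
  rw [mem_swpk_iff fun p hp => (hP p hp).1, mem_inter_iff, mem_add_segment_neg_smul_zero_iff]
  constructor
  · rintro ⟨p, hp, t, ⟨ht0, htp⟩, rfl⟩
    obtain ⟨hp0, hpγ⟩ := hP p hp
    refine ⟨⟨p, hp, t, ?_, rfl⟩, ?_⟩
    · rw [uIcc_of_le (hp0.trans hpγ)]
      exact ⟨ht0, htp.trans hpγ⟩
    · simpa using htp
  · rintro ⟨⟨p, hp, t, ht, rfl⟩, hq⟩
    obtain ⟨hp0, hpγ⟩ := hP p hp
    rw [uIcc_of_le (hp0.trans hpγ)] at ht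
    exact ⟨p, hp, t, ⟨ht.1, by simpa using hq⟩, rfl⟩

theorem stmt11_general (d : ℕ) (k : Fin d) (P : Set (Fin d → ℝ))
    (hpos : ∀ x ∈ P, 0 < x k)
    (γ : ℝ) (hγ : ∀ x ∈ P, x k < γ) :
    swpk d k P =
      (P + segment ℝ (-(γ • (Pi.single k 1 : Fin d → ℝ))) 0) ∩ {x | 0 ≤ x k} :=
  swpk_eq_add_segment_inter fun x hx => ⟨(hpos x hx).le, (hγ x hx).le⟩

/-- For a polytope `P ⊂ {x | x k > 0}` contained in a hyperplane not orthogonal to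
`{x | x k = 0}` and `γ` exceeding the maximum `k`-th coordinate over `P`, the sweep
equals the Minkowski sum of `P` with the segment `[-γ e k, 0]` intersected with the
halfspace `{x | x k ≥ 0}`. -/
theorem stmt11 (d : ℕ) (k : Fin d) (S : Finset (Fin d → ℝ)) (P : Set (Fin d → ℝ))
    (hP : P = convexHull ℝ (S : Set (Fin d → ℝ)))
    (hpos : ∀ x ∈ P, 0 < x k)
    (π : Fin d → ℝ) (π0 : ℝ) (hπk : π k ≠ 0)
    (hplane : ∀ x ∈ P, (∑ i, π i * x i) = π0)
    (γ : ℝ) (hγ : ∀ x ∈ P, x k < γ) :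
    swpk d k P =
      (P + segment ℝ (-(γ • (Pi.single k 1 : Fin d → ℝ))) 0) ∩ {x | 0 ≤ x k} :=
  stmt11_general d k P hpos γ hγ
end

section
/- Let P ⊂ ℝ^d be a full-dimensional polytope with P ⊂ {x : x_k ≥ 0}. Every point x ∈ P is shaded in direction e_k by a point lying in some e_k-top facet of P; that is, there exist a facet F of P whose outward normal π satisfies π_k > 0 and a point x̂ ∈ F with x̂_k ≥ x_k and x̂_i = x_i for all i ≠ k. -/
/-!
Push each point `z` of `P` upward (in direction `e k`) as far as the constraints allow, to the
point `lift z`. The rows `i` with `π i k > 0` split `P` into the closed regions where row `i` is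
the first one hit; by Baire's theorem `x` lies in such a region with nonempty interior. The row
`i` is then tight at `lift x`, and it defines a facet: on its region the lift is the projection
along `e k` onto the hyperplane `π i ⬝ᵥ y = b i`, so moving an interior point of the region by a
small vector `v` with `π i ⬝ᵥ v = 0` moves its lift by `v`; hence the face spans the hyperplane.
-/

open Finset Matrix Set Filter Topology

theorem closure_interior_subset_iUnion_closure_interior {X ι : Type*} [TopologicalSpace X]
    [BaireSpace X] [Finite ι] {P : Set X} {T : ι → Set X} (hT : ∀ i, IsClosed (T i))
    (hP : P ⊆ ⋃ i, T i) : closure (interior P) ⊆ ⋃ i, closure (interior (T i)) := by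
  set D := ⋃ i, interior (T i)
  -- Baire's theorem for the closed cover of `X` by `(interior P)ᶜ` and the `T i`
  have hdense : Dense ((interior P)ᶜ ∪ D) := by
    have hcover : ⋃ o : Option ι, o.elim (interior P)ᶜ T = univ := by
      rw [iUnion_option, eq_univ_iff_forall]
      intro z
      by_cases hz : z ∈ interior P
      · exact .inr (hP (interior_subset hz))
      · exact .inl hz
    refine (dense_iUnion_interior_of_closed (fun o => ?_) hcover).mono ?_
    · cases o
      exacts [isOpen_interior.isClosed_compl, hT _]
    · rw [iUnion_option]
      exact union_subset_union_left _ interior_subset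
  have hsub : interior P ⊆ closure D := fun z hz =>
    closure_mono (by rintro w ⟨hw, hw' | hw'⟩; exacts [absurd hw hw', hw'])
      (isOpen_interior.inter_closure ⟨hz, hdense z⟩)
  rw [← closure_iUnion_of_finite]
  exact closure_minimal hsub isClosed_closure

theorem finrank_ker_dotProductEquiv {K n : Type*} [Field K] [Fintype n] [DecidableEq n]
    {c : n → K} (hc : c ≠ 0) :
    Module.finrank K (LinearMap.ker (dotProductEquiv K n c)) = Fintype.card n - 1 := by
  have h := Module.Dual.finrank_ker_add_one_of_ne_zero
    ((LinearEquiv.map_ne_zero_iff (dotProductEquiv K n)).2 hc)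
  rw [Module.finrank_fintype_fun_eq_card] at h
  omega

namespace TopFacet

variable {d m : ℕ} (π : Fin m → Fin d → ℝ) (b : Fin m → ℝ) (k : Fin d)

def polyhedron : Set (Fin d → ℝ) := {x | ∀ i, π i ⬝ᵥ x ≤ b i}

def face (i : Fin m) : Set (Fin d → ℝ) := {y ∈ polyhedron π b | π i ⬝ᵥ y = b i}

noncomputable def topRows : Finset (Fin m) := {i | 0 < π i k}

/-- How far `z` can move in direction `e k` before violating the `i`-th constraint,
for `i ∈ topRows π k`. -/
noncomputable def slack (i : Fin m) (z : Fin d → ℝ) : ℝ := (b i - π i ⬝ᵥ z) / π i k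

noncomputable def headroom (hs : (topRows π k).Nonempty) (z : Fin d → ℝ) : ℝ :=
  (topRows π k).inf' hs fun i => slack π b k i z

noncomputable def lift (hs : (topRows π k).Nonempty) (z : Fin d → ℝ) : Fin d → ℝ :=
  z + headroom π b k hs z • Pi.single k 1

def region (i : Fin m) : Set (Fin d → ℝ) :=
  {z ∈ polyhedron π b | ∀ j ∈ topRows π k, slack π b k i z ≤ slack π b k j z}

variable {π b k}

theorem convex_polyhedron : Convex ℝ (polyhedron π b) := by
  have h : polyhedron π b = ⋂ i, {x | dotProductEquiv ℝ (Fin d) (π i) x ≤ b i} := by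
    ext; simp [polyhedron]
  rw [h]
  exact convex_iInter fun i => convex_halfSpace_le (LinearMap.isLinear _) _

theorem isClosed_polyhedron : IsClosed (polyhedron π b) := by
  simp only [polyhedron, ofPred_forall]
  exact isClosed_iInter fun i => isClosed_le (by fun_prop) continuous_const

theorem mem_topRows {i : Fin m} : i ∈ topRows π k ↔ 0 < π i k := by
  simp [topRows]

theorem dotProduct_add_smul_single (c z : Fin d → ℝ) (t : ℝ) :
    c ⬝ᵥ (z + t • Pi.single k 1) = c ⬝ᵥ z + t * c k := by
  simp [dotProduct_add, dotProduct_smul, dotProduct_single]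

theorem topRows_nonempty (hne : (polyhedron π b).Nonempty)
    (hbdd : BddAbove ((fun x => x k) '' polyhedron π b)) : (topRows π k).Nonempty := by
  by_contra hs
  have hdown : ∀ i, π i k ≤ 0 := fun i => not_lt.1 fun hi => hs ⟨i, mem_topRows.2 hi⟩
  obtain ⟨x, hx⟩ := hne
  obtain ⟨M, hM⟩ := hbdd
  have hxM : x k ≤ M := hM ⟨x, hx, rfl⟩
  -- `P` would contain the whole upward ray from `x`
  have hray : x + (M - x k + 1) • Pi.single k 1 ∈ polyhedron π b := fun i => by
    rw [dotProduct_add_smul_single]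
    nlinarith [hx i, hdown i]
  have := hM ⟨_, hray, rfl⟩
  simp only [Pi.add_apply, Pi.smul_apply, Pi.single_eq_same, smul_eq_mul, mul_one] at this
  linarith

theorem slack_nonneg {z : Fin d → ℝ} (hz : z ∈ polyhedron π b) {i : Fin m}
    (hi : i ∈ topRows π k) : 0 ≤ slack π b k i z :=
  div_nonneg (sub_nonneg.2 (hz i)) (mem_topRows.1 hi).le

theorem headroom_nonneg (hs : (topRows π k).Nonempty) {z : Fin d → ℝ}
    (hz : z ∈ polyhedron π b) : 0 ≤ headroom π b k hs z :=
  le_inf' _ _ fun _ hi => slack_nonneg hz hi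

theorem lift_mem_polyhedron (hs : (topRows π k).Nonempty) {z : Fin d → ℝ}
    (hz : z ∈ polyhedron π b) : lift π b k hs z ∈ polyhedron π b := fun i => by
  rw [lift, dotProduct_add_smul_single]
  rcases le_or_gt (π i k) 0 with hi | hi
  · nlinarith [hz i, headroom_nonneg hs hz]
  · have h : headroom π b k hs z ≤ slack π b k i z := inf'_le _ (mem_topRows.2 hi)
    rw [slack, le_div_iff₀ hi] at h
    linarith

theorem isClosed_region (i : Fin m) : IsClosed (region π b k i) := by
  refine isClosed_polyhedron.inter ?_
  change IsClosed {z | ∀ j ∈ topRows π k, slack π b k i z ≤ slack π b k j z}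
  simp only [ofPred_forall]
  exact isClosed_iInter fun j => isClosed_iInter fun _ =>
    isClosed_le (by unfold slack; fun_prop) (by unfold slack; fun_prop)

theorem polyhedron_subset_iUnion_region (hs : (topRows π k).Nonempty) :
    polyhedron π b ⊆ ⋃ i : topRows π k, region π b k i := fun z hz => by
  obtain ⟨i, hi, hmin⟩ := exists_mem_eq_inf' hs fun i => slack π b k i z
  exact mem_iUnion.2 ⟨⟨i, hi⟩, hz, fun j hj => hmin ▸ inf'_le _ hj⟩

theorem lift_eq_of_mem_region (hs : (topRows π k).Nonempty) {i : Fin m} (hi : i ∈ topRows π k)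
    {z : Fin d → ℝ} (hz : z ∈ region π b k i) :
    lift π b k hs z = z + slack π b k i z • Pi.single k 1 := by
  rw [lift, headroom, le_antisymm (inf'_le _ hi) (le_inf' _ _ hz.2)]

theorem lift_mem_face (hs : (topRows π k).Nonempty) {i : Fin m} (hi : i ∈ topRows π k)
    {z : Fin d → ℝ} (hz : z ∈ region π b k i) : lift π b k hs z ∈ face π b i := by
  refine ⟨lift_mem_polyhedron hs hz.1, ?_⟩
  rw [lift_eq_of_mem_region hs hi hz, dotProduct_add_smul_single, slack,
    div_mul_cancel₀ _ (mem_topRows.1 hi).ne']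
  ring

theorem face_eq_argmax {i : Fin m} {y₀ : Fin d → ℝ} (hy₀ : y₀ ∈ face π b i) :
    face π b i = {y ∈ polyhedron π b | ∀ z ∈ polyhedron π b, π i ⬝ᵥ z ≤ π i ⬝ᵥ y} := by
  ext y
  constructor
  · rintro ⟨hy, hyb⟩
    exact ⟨hy, fun z hz => hyb ▸ hz i⟩
  · rintro ⟨hy, hmax⟩
    exact ⟨hy, le_antisymm (hy i) (hy₀.2 ▸ hmax y₀ hy₀.1)⟩

theorem vectorSpan_face_le_ker (i : Fin m) :
    vectorSpan ℝ (face π b i) ≤ LinearMap.ker (dotProductEquiv ℝ (Fin d) (π i)) := by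
  rw [vectorSpan_def, Submodule.span_le]
  rintro _ ⟨y, hy, z, hz, rfl⟩
  simp [vsub_eq_sub, dotProduct_sub, hy.2, hz.2]

theorem ker_le_vectorSpan_face (hs : (topRows π k).Nonempty) {i : Fin m} (hi : i ∈ topRows π k)
    {p : Fin d → ℝ} (hp : p ∈ interior (region π b k i)) :
    LinearMap.ker (dotProductEquiv ℝ (Fin d) (π i)) ≤ vectorSpan ℝ (face π b i) := by
  intro v hv
  rw [LinearMap.mem_ker, dotProductEquiv_apply_apply] at hv
  obtain ⟨ε, hpε, hε⟩ : ∃ ε : ℝ, p + ε • v ∈ region π b k i ∧ 0 < ε := by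
    have hnear : ∀ᶠ ε in 𝓝 (0 : ℝ), p + ε • v ∈ region π b k i :=
      (Continuous.tendsto' (by fun_prop) 0 p (by simp)).eventually
        (mem_interior_iff_mem_nhds.1 hp)
    exact ((hnear.filter_mono nhdsWithin_le_nhds).and (self_mem_nhdsWithin (s := Ioi 0))).exists
  have hslack : slack π b k i (p + ε • v) = slack π b k i p := by
    simp [slack, dotProduct_add, dotProduct_smul, hv]
  have hlift : lift π b k hs (p + ε • v) -ᵥ lift π b k hs p = ε • v := by
    rw [lift_eq_of_mem_region hs hi hpε, lift_eq_of_mem_region hs hi (interior_subset hp),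
      hslack, vsub_eq_sub]
    abel
  have hεv : ε • v ∈ vectorSpan ℝ (face π b i) :=
    hlift ▸ vsub_mem_vectorSpan ℝ (lift_mem_face hs hi hpε)
      (lift_mem_face hs hi (interior_subset hp))
  simpa [smul_smul, hε.ne'] using Submodule.smul_mem _ ε⁻¹ hεv

end TopFacet

open TopFacet in
theorem stmt12_general (d m : ℕ) (k : Fin d) (π : Fin m → Fin d → ℝ) (b : Fin m → ℝ)
    (P : Set (Fin d → ℝ)) (hPdef : P = {x | ∀ i, (∑ j, π i j * x j) ≤ b i})
    (hcomp : IsCompact P) (hint : (interior P).Nonempty) :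
    ∀ x ∈ P, ∃ (c : Fin d → ℝ) (F : Set (Fin d → ℝ)),
      0 < c k ∧
      F = {y ∈ P | ∀ z ∈ P, (∑ j, c j * z j) ≤ ∑ j, c j * y j} ∧
      Module.finrank ℝ (affineSpan ℝ F).direction = d - 1 ∧
      ∃ x' ∈ F, x k ≤ x' k ∧ ∀ i, i ≠ k → x' i = x i := by
  change P = polyhedron π b at hPdef
  subst hPdef
  intro x hx
  have hs := topRows_nonempty ⟨x, hx⟩ (hcomp.bddAbove_image (continuous_apply k).continuousOn)
  have hx' : x ∈ closure (interior (polyhedron π b)) := by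
    rw [convex_polyhedron.closure_interior_eq_closure_of_nonempty_interior hint]
    exact subset_closure hx
  obtain ⟨⟨i, hi⟩, hxi⟩ := mem_iUnion.1 <| closure_interior_subset_iUnion_closure_interior
    (fun i => isClosed_region _) (polyhedron_subset_iUnion_region hs) hx'
  obtain ⟨p, hp⟩ : (interior (region π b k i)).Nonempty := closure_nonempty_iff.1 ⟨x, hxi⟩
  have hxi : x ∈ region π b k i := closure_minimal interior_subset (isClosed_region i) hxi
  have hπi : 0 < π i k := mem_topRows.1 hi
  refine ⟨π i, face π b i, hπi, face_eq_argmax (lift_mem_face hs hi hxi), ?_,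
    lift π b k hs x, lift_mem_face hs hi hxi, ?_, fun j hj => ?_⟩
  · rw [direction_affineSpan, le_antisymm (vectorSpan_face_le_ker i)
      (ker_le_vectorSpan_face hs hi hp), finrank_ker_dotProductEquiv, Fintype.card_fin]
    exact fun h => hπi.ne' (congrFun h k)
  · simpa [lift] using headroom_nonneg hs hx
  · simp [lift, hj]

/-- Every point of a full-dimensional polytope `P ⊆ {x | x k ≥ 0}` is shaded in direction
`e k` by a point lying in some `e k`-top facet of `P`: a `(d-1)`-dimensional face of `P`
which is the argmax over `P` of a linear functional `c` with `c k > 0`. -/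
theorem stmt12 (d m : ℕ) (k : Fin d) (π : Fin m → Fin d → ℝ) (b : Fin m → ℝ)
    (P : Set (Fin d → ℝ)) (hPdef : P = {x | ∀ i, (∑ j, π i j * x j) ≤ b i})
    (hcomp : IsCompact P) (hint : (interior P).Nonempty)
    (hPk : ∀ x ∈ P, 0 ≤ x k) :
    ∀ x ∈ P, ∃ (c : Fin d → ℝ) (F : Set (Fin d → ℝ)),
      0 < c k ∧
      F = {y ∈ P | ∀ z ∈ P, (∑ j, c j * z j) ≤ ∑ j, c j * y j} ∧
      Module.finrank ℝ (affineSpan ℝ F).direction = d - 1 ∧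
      ∃ x' ∈ F, x k ≤ x' k ∧ ∀ i, i ≠ k → x' i = x i :=
  stmt12_general d m k π b P hPdef hcomp hint
end

section
/- Let P ⊂ {x ∈ ℝ^d : x_k ≥ 0} be a full-dimensional polytope and F an e_k-top facet of P (outward normal π with π_k > 0). Then F is also a facet of the sweep swp_k(P) = {p − θ p_k e_k : p ∈ P, θ ∈ [0,1]}; in particular the inequality πᵀx ≤ π₀ defining F on P is valid for all of swp_k(P) and holds with equality on F. -/
theorem dotProduct_sub_smul_single {ι R : Type*} [Fintype ι] [DecidableEq ι] [CommRing R]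
    (π p : ι → R) (k : ι) (c : R) :
    π ⬝ᵥ (p - c • Pi.single k 1) = π ⬝ᵥ p - c * π k := by
  simp [dotProduct_sub, dotProduct_smul, dotProduct_single]

theorem subset_swpk (d : ℕ) (k : Fin d) (P : Set (Fin d → ℝ)) : P ⊆ swpk d k P :=
  fun p hp => ⟨p, hp, 0, ⟨le_rfl, zero_le_one⟩, by simp⟩

theorem exists_eq_sub_smul_single_of_mem_swpk {d : ℕ} {k : Fin d} {P : Set (Fin d → ℝ)}
    (hPk : ∀ x ∈ P, 0 ≤ x k) {q : Fin d → ℝ} (hq : q ∈ swpk d k P) :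
    ∃ p ∈ P, ∃ c : ℝ, 0 ≤ c ∧ q = p - c • Pi.single k 1 := by
  obtain ⟨p, hp, θ, hθ, rfl⟩ := hq
  exact ⟨p, hp, θ * p k, mul_nonneg hθ.1 (hPk p hp), rfl⟩

theorem stmt13_general (d : ℕ) (k : Fin d) (P : Set (Fin d → ℝ))
    (hPk : ∀ x ∈ P, 0 ≤ x k)
    (π : Fin d → ℝ) (π0 : ℝ) (hπk : 0 < π k)
    (hvalid : ∀ x ∈ P, (∑ j, π j * x j) ≤ π0)
    (F : Set (Fin d → ℝ)) (hF : F = {x ∈ P | (∑ j, π j * x j) = π0}) :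
    (∀ x ∈ swpk d k P, (∑ j, π j * x j) ≤ π0) ∧
    {x ∈ swpk d k P | (∑ j, π j * x j) = π0} = F := by
  subst hF
  have sweep_value : ∀ q ∈ swpk d k P, ∃ p ∈ P, ∃ c : ℝ, 0 ≤ c ∧ q = p - c • Pi.single k 1 ∧
      ∑ j, π j * q j = ∑ j, π j * p j - c * π k := by
    intro q hq
    obtain ⟨p, hp, c, hc, rfl⟩ := exists_eq_sub_smul_single_of_mem_swpk hPk hq
    exact ⟨p, hp, c, hc, rfl, dotProduct_sub_smul_single π p k c⟩
  refine ⟨fun q hq => ?_, Set.Subset.antisymm (fun q ⟨hq, hqπ⟩ => ?_)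
    fun x hx => ⟨subset_swpk d k P hx.1, hx.2⟩⟩
  · obtain ⟨p, hp, c, hc, -, hval⟩ := sweep_value q hq
    nlinarith [hvalid p hp]
  · obtain ⟨p, hp, c, hc, rfl, hval⟩ := sweep_value q hq
    have hc0 : c = 0 := by nlinarith [hvalid p hp]
    subst hc0
    rw [zero_smul, sub_zero] at hqπ ⊢
    exact ⟨hp, hqπ⟩

/-- An `e k`-top facet `F` of a full-dimensional polytope `P ⊆ {x | x k ≥ 0}` (with defining
inequality `πᵀx ≤ π₀`, `π k > 0`) is also a facet of the sweep `swpk d k P`: the inequality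
is valid on all of the sweep, is tight exactly on `F`, and the resulting face is
`(d-1)`-dimensional. -/
theorem stmt13 (d : ℕ) (k : Fin d) (P : Set (Fin d → ℝ))
    (hconv : Convex ℝ P) (hcomp : IsCompact P) (hint : (interior P).Nonempty)
    (hPk : ∀ x ∈ P, 0 ≤ x k)
    (π : Fin d → ℝ) (π0 : ℝ) (hπk : 0 < π k)
    (hvalid : ∀ x ∈ P, (∑ j, π j * x j) ≤ π0)
    (F : Set (Fin d → ℝ)) (hF : F = {x ∈ P | (∑ j, π j * x j) = π0})
    (hFne : F.Nonempty)
    (hdim : Module.finrank ℝ (affineSpan ℝ F).direction = d - 1) :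
    (∀ x ∈ swpk d k P, (∑ j, π j * x j) ≤ π0) ∧
    {x ∈ swpk d k P | (∑ j, π j * x j) = π0} = F :=
  stmt13_general d k P hPk π π0 hπk hvalid F hF
end
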